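/- arXiv:1011.6324 — 3 statements merged into one kernel-verified Lean document; each statement's English description precedes it below -/
import Mathlib

section
/- For positive definite matrices A, B, positive semidefinite matrices C, D, and a Hermitian matrix X: Tr(X A⁻¹ X B⁻¹) − Tr(X (A+C)⁻¹ X (B+D)⁻¹) ≥ 0. -/
/-!
Matrix inversion is operator antitone, so `(A + C)⁻¹ ≤ A⁻¹` and `(B + D)⁻¹ ≤ B⁻¹` in the Loewner
order. The map `(P, Q) ↦ Tr (X P X Q)` is monotone in each argument on positive semidefinite
matrices: conjugation by `X` preserves the order, and `Tr (M N) = Tr (√N M √N) ≥ 0` for `M, N ≥ 0`.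
-/
open Matrix ComplexOrder
open scoped MatrixOrder

namespace Matrix

variable {𝕜 n : Type*} [RCLike 𝕜] [Fintype n] [DecidableEq n]

lemma trace_mul_nonneg {M N : Matrix n n 𝕜} (hM : 0 ≤ M) (hN : 0 ≤ N) :
    0 ≤ (M * N).trace := by
  rw [← CFC.sqrt_mul_sqrt_self N hN, ← mul_assoc, trace_mul_cycle]
  have hsqrt : star (CFC.sqrt N) = CFC.sqrt N := (CFC.sqrt_nonneg N).isSelfAdjoint.star_eq
  have hconj := star_left_conjugate_nonneg hM (CFC.sqrt N)
  rw [hsqrt] at hconj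
  exact (nonneg_iff_posSemidef.mp hconj).trace_nonneg

lemma trace_conj_mul_le_of_le {X P P' Q Q' : Matrix n n 𝕜} (hP : 0 ≤ P) (hPP' : P ≤ P')
    (hQ : 0 ≤ Q) (hQQ' : Q ≤ Q') :
    (star X * P * X * Q).trace ≤ (star X * P' * X * Q').trace := by
  have hsplit : star X * P' * X * Q' - star X * P * X * Q
      = (star X * P' * X - star X * P * X) * Q' + star X * P * X * (Q' - Q) := by
    noncomm_ring
  rw [← sub_nonneg, ← trace_sub, hsplit, trace_add]
  exact add_nonneg
    (trace_mul_nonneg (sub_nonneg.mpr (star_left_conjugate_le_conjugate hPP' X)) (hQ.trans hQQ'))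
    (trace_mul_nonneg (star_left_conjugate_nonneg hP X) (sub_nonneg.mpr hQQ'))

end Matrix

open scoped Matrix.Norms.L2Operator in
lemma Matrix.PosDef.inv_le_inv_of_le {n : Type*} [Fintype n] [DecidableEq n]
    {A B : Matrix n n ℂ} (hA : A.PosDef) (hAB : A ≤ B) : B⁻¹ ≤ A⁻¹ := by
  have hB : B.PosDef := add_sub_cancel A B ▸ hA.add_posSemidef (le_iff.mp hAB)
  simpa [coe_units_inv] using
    CStarAlgebra.inv_le_inv (a := hA.isUnit.unit) (b := hB.isUnit.unit) hA.posSemidef.nonneg hAB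

theorem trace_monotone_inv (n : ℕ) (A B C D X : Matrix (Fin n) (Fin n) ℂ)
    (hA : A.PosDef) (hB : B.PosDef) (hC : C.PosSemidef) (hD : D.PosSemidef)
    (hX : X.IsHermitian) :
    0 ≤ Matrix.trace (X * A⁻¹ * X * B⁻¹) - Matrix.trace (X * (A + C)⁻¹ * X * (B + D)⁻¹) := by
  have hAC := hA.inv_le_inv_of_le (le_add_of_nonneg_right hC.nonneg)
  have hBD := hB.inv_le_inv_of_le (le_add_of_nonneg_right hD.nonneg)
  have hmono := trace_conj_mul_le_of_le (X := X)
    (hA.add_posSemidef hC).inv.posSemidef.nonneg hAC (hB.add_posSemidef hD).inv.posSemidef.nonneg hBD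
  rw [star_eq_conjTranspose, hX.eq] at hmono
  exact sub_nonneg.mpr hmono
end

section
/- For positive definite matrices A₁, B₁: Tr((A₁−B₁)(B₁⁻¹ − A₁⁻¹)) = Tr((A₁−B₁) B₁⁻¹ (A₁−B₁) A₁⁻¹), and this quantity is nonnegative. -/
/-!
Since `B⁻¹ - A⁻¹ = B⁻¹ (A - B) A⁻¹`, the trace is `tr (M A⁻¹)` with `M = (A - B) B⁻¹ (A - B)`.
Both `M` and `A⁻¹` are positive semidefinite, and the trace of a product of two positive
semidefinite matrices is nonnegative: writing `M = Xᴴ X`, `tr (Xᴴ X A⁻¹) = tr (X A⁻¹ Xᴴ) ≥ 0`.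
-/

open Matrix ComplexOrder

lemma Matrix.PosSemidef.trace_mul_nonneg {𝕜 n : Type*} [RCLike 𝕜] [Fintype n] [DecidableEq n]
    {P Q : Matrix n n 𝕜} (hP : P.PosSemidef) (hQ : Q.PosSemidef) : 0 ≤ (P * Q).trace := by
  open scoped MatrixOrder in
  obtain ⟨X, rfl⟩ := CStarAlgebra.nonneg_iff_eq_star_mul_self.mp hP.nonneg
  rw [star_eq_conjTranspose, Matrix.mul_assoc, trace_mul_comm]
  exact (hQ.mul_mul_conjTranspose_same X).trace_nonneg

theorem trace_K1_case (n : ℕ) (A₁ B₁ : Matrix (Fin n) (Fin n) ℂ)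
    (hA : A₁.PosDef) (hB : B₁.PosDef) :
    Matrix.trace ((A₁ - B₁) * (B₁⁻¹ - A₁⁻¹)) =
      Matrix.trace ((A₁ - B₁) * B₁⁻¹ * (A₁ - B₁) * A₁⁻¹) ∧
    0 ≤ Matrix.trace ((A₁ - B₁) * (B₁⁻¹ - A₁⁻¹)) := by
  have hinv : B₁⁻¹ - A₁⁻¹ = B₁⁻¹ * (A₁ - B₁) * A₁⁻¹ := by
    simpa only [nonsing_inv_eq_ringInverse] using
      Ring.inverse_sub_inverse (iff_of_true hB.isUnit hA.isUnit)
  have hprod : (A₁ - B₁) * (B₁⁻¹ - A₁⁻¹) = (A₁ - B₁) * B₁⁻¹ * (A₁ - B₁) * A₁⁻¹ := by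
    simp only [hinv, Matrix.mul_assoc]
  have hsandwich : ((A₁ - B₁) * B₁⁻¹ * (A₁ - B₁)).PosSemidef := by
    simpa only [(hA.isHermitian.sub hB.isHermitian).eq] using
      hB.inv.posSemidef.conjTranspose_mul_mul_same (A₁ - B₁)
  rw [hprod]
  exact ⟨rfl, hsandwich.trace_mul_nonneg hA.inv.posSemidef⟩
end

section
/- For positive definite matrices A₁, B₁ and positive semidefinite matrices A₂, B₂: Tr((A₁−B₁)(B₁⁻¹ − A₁⁻¹) + (A₂−B₂)((B₁+B₂)⁻¹ − (A₁+A₂)⁻¹)) ≥ 0. -/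
/-!
Write `D = A₁ - B₁`, `E = A₂ - B₂`, `X = B₁⁻¹ ≥ X' = (B₁ + B₂)⁻¹` and `Y = A₁⁻¹ ≥ Y' = (A₁ + A₂)⁻¹`.
Factoring `B⁻¹ - A⁻¹` as `B⁻¹ (A - B) A⁻¹` or as `A⁻¹ (A - B) B⁻¹` writes the trace `T` of the
statement in two ways; their sum is
`2 T = tr(DXDY) + (tr(DXDY) - tr(DX'DY')) + tr((D+E)X'(D+E)Y') + tr(EX'EY')`,
where every `tr(MPMQ)` with `M` Hermitian and `P, Q ≥ 0` is nonnegative, and the bracket is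
nonnegative because this expression is monotone in `P` and `Q`.
-/

open Matrix ComplexOrder

namespace Matrix

variable {𝕜 ι : Type*} [RCLike 𝕜] [Fintype ι]

open scoped MatrixOrder

theorem PosSemidef.trace_mul_nonneg_s6 {P Q : Matrix ι ι 𝕜} (hP : P.PosSemidef)
    (hQ : Q.PosSemidef) : 0 ≤ (P * Q).trace := by
  classical
  obtain ⟨R, rfl⟩ := CStarAlgebra.nonneg_iff_eq_star_mul_self.mp hQ.nonneg
  rw [← Matrix.mul_assoc, trace_mul_comm, ← Matrix.mul_assoc]
  exact (hP.mul_mul_conjTranspose_same R).trace_nonneg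

theorem IsHermitian.trace_mul_mul_mul_nonneg {D X Y : Matrix ι ι 𝕜} (hD : D.IsHermitian)
    (hX : X.PosSemidef) (hY : Y.PosSemidef) : 0 ≤ (D * X * D * Y).trace := by
  have hDXD := hX.mul_mul_conjTranspose_same D
  rw [hD.eq] at hDXD
  exact hDXD.trace_mul_nonneg_s6 hY

theorem IsHermitian.trace_mul_mul_mul_mono {D X Y X' Y' : Matrix ι ι 𝕜} (hD : D.IsHermitian)
    (hX' : X'.PosSemidef) (hY : Y.PosSemidef) (hXX' : X' ≤ X) (hYY' : Y' ≤ Y) :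
    (D * X' * D * Y').trace ≤ (D * X * D * Y).trace := by
  have hsplit : (D * X * D * Y).trace - (D * X' * D * Y').trace =
      (D * (X - X') * D * Y).trace + (D * X' * D * (Y - Y')).trace := by
    rw [← trace_sub, ← trace_add]
    congr 1
    noncomm_ring
  rw [← sub_nonneg, hsplit]
  exact add_nonneg (hD.trace_mul_mul_mul_nonneg hXX' hY) (hD.trace_mul_mul_mul_nonneg hX' hYY')

theorem IsHermitian.two_mul_trace_add_trace_add_trace_nonneg {D E X Y X' Y' : Matrix ι ι 𝕜}
    (hD : D.IsHermitian) (hE : E.IsHermitian) (hX' : X'.PosSemidef) (hY' : Y'.PosSemidef)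
    (hXX' : X' ≤ X) (hYY' : Y' ≤ Y) :
    0 ≤ 2 * (D * X * D * Y).trace + (E * X' * (D + E) * Y').trace +
      ((D + E) * X' * E * Y').trace := by
  have hX : X.PosSemidef := add_sub_cancel X' X ▸ hX'.add hXX'
  have hY : Y.PosSemidef := add_sub_cancel Y' Y ▸ hY'.add hYY'
  have hexpand : 2 * (D * X * D * Y).trace + (E * X' * (D + E) * Y').trace +
      ((D + E) * X' * E * Y').trace =
      (D * X * D * Y).trace + ((D * X * D * Y).trace - (D * X' * D * Y').trace) +
        ((D + E) * X' * (D + E) * Y').trace + (E * X' * E * Y').trace := by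
    simp only [Matrix.add_mul, Matrix.mul_add, trace_add]
    ring
  rw [hexpand]
  exact add_nonneg (add_nonneg (add_nonneg (hD.trace_mul_mul_mul_nonneg hX hY)
    (sub_nonneg.mpr (hD.trace_mul_mul_mul_mono hX' hY hXX' hYY')))
    ((hD.add hE).trace_mul_mul_mul_nonneg hX' hY')) (hE.trace_mul_mul_mul_nonneg hX' hY')

theorem inv_sub_inv_eq_inv_mul_sub_mul_inv {R : Type*} [CommRing R] [DecidableEq ι]
    {A B : Matrix ι ι R}
    (h : IsUnit A ↔ IsUnit B) : A⁻¹ - B⁻¹ = A⁻¹ * (B - A) * B⁻¹ := by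
  simpa only [nonsing_inv_eq_ringInverse] using Ring.inverse_sub_inverse h

theorem inv_sub_inv_eq_inv_mul_sub_mul_inv' {R : Type*} [CommRing R] [DecidableEq ι]
    {A B : Matrix ι ι R}
    (h : IsUnit A ↔ IsUnit B) : A⁻¹ - B⁻¹ = B⁻¹ * (B - A) * A⁻¹ := by
  rw [← neg_sub, inv_sub_inv_eq_inv_mul_sub_mul_inv h.symm]
  noncomm_ring

open scoped Matrix.Norms.L2Operator in
theorem PosDef.inv_le_inv [DecidableEq ι] {A B : Matrix ι ι ℂ} (hA : A.PosDef) (hAB : A ≤ B) :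
    B⁻¹ ≤ A⁻¹ := by
  simpa only [nonsing_inv_eq_ringInverse] using
    CStarAlgebra.ringInverse_le_ringInverse hAB hA.isStrictlyPositive

end Matrix

theorem trace_K2_case (n : ℕ) (A₁ B₁ A₂ B₂ : Matrix (Fin n) (Fin n) ℂ)
    (hA1 : A₁.PosDef) (hB1 : B₁.PosDef) (hA2 : A₂.PosSemidef) (hB2 : B₂.PosSemidef) :
    0 ≤ Matrix.trace ((A₁ - B₁) * (B₁⁻¹ - A₁⁻¹) +
      (A₂ - B₂) * ((B₁ + B₂)⁻¹ - (A₁ + A₂)⁻¹)) := by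
  have hA : (A₁ + A₂).PosDef := hA1.add_posSemidef hA2
  have hB : (B₁ + B₂).PosDef := hB1.add_posSemidef hB2
  have hunit₁ : IsUnit B₁ ↔ IsUnit A₁ := iff_of_true hB1.isUnit hA1.isUnit
  have hunit₁₂ : IsUnit (B₁ + B₂) ↔ IsUnit (A₁ + A₂) := iff_of_true hB.isUnit hA.isUnit
  have hsum : A₁ + A₂ - (B₁ + B₂) = (A₁ - B₁) + (A₂ - B₂) := by abel
  set D := A₁ - B₁ with hD
  set E := A₂ - B₂
  set T := Matrix.trace (D * (B₁⁻¹ - A₁⁻¹) + E * ((B₁ + B₂)⁻¹ - (A₁ + A₂)⁻¹)) with hT_def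
  have hT : T = (D * B₁⁻¹ * D * A₁⁻¹).trace +
      (E * (B₁ + B₂)⁻¹ * (D + E) * (A₁ + A₂)⁻¹).trace := by
    rw [hT_def, inv_sub_inv_eq_inv_mul_sub_mul_inv hunit₁,
      inv_sub_inv_eq_inv_mul_sub_mul_inv hunit₁₂, hsum, trace_add]
    simp only [Matrix.mul_assoc, ← hD]
  have hT' : T = (D * B₁⁻¹ * D * A₁⁻¹).trace +
      ((D + E) * (B₁ + B₂)⁻¹ * E * (A₁ + A₂)⁻¹).trace := by
    rw [hT_def, inv_sub_inv_eq_inv_mul_sub_mul_inv' hunit₁,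
      inv_sub_inv_eq_inv_mul_sub_mul_inv' hunit₁₂, hsum, trace_add]
    simp only [Matrix.mul_assoc, ← hD]
    rw [trace_mul_cycle' D, trace_mul_cycle' E]
    simp only [Matrix.mul_assoc]
  have h2T : 0 ≤ 2 * T := by
    open scoped MatrixOrder in
    refine ((hA1.isHermitian.sub hB1.isHermitian).two_mul_trace_add_trace_add_trace_nonneg
      (hA2.isHermitian.sub hB2.isHermitian) hB.inv.posSemidef hA.inv.posSemidef
      (hB1.inv_le_inv (le_add_of_nonneg_right hB2.nonneg))
      (hA1.inv_le_inv (le_add_of_nonneg_right hA2.nonneg))).trans_eq ?_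
    linear_combination -hT - hT'
  simpa using mul_nonneg (by positivity : (0 : ℂ) ≤ 2⁻¹) h2T
end
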